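/- Let β > 0, let N be a positive integer, and let V(s) = e^{−βs/8} · ₀F₁(2/β; s/4) where ₀F₁(c; z) = ∑_{p≥0} z^p/(p! (c)_p). Define F_N(s) = e^{−βs/8} ∑_{p=0}^N ((−N)_p/(p! (2/β)_p)) (−s/(4N))^p, the gap probability E_{N,β}(0;(0,s/(4N)); x e^{−βx/2}) for a = 1. Then for each fixed s > 0, N·(F_N(s) − V(s)) → (s/β) V'(s) as N → ∞. -/

import Mathlib

open Filter Finset

/-- The rising Pochhammer symbol `(x)_p`. -/
noncomputable def poch (x : ℝ) (p : ℕ) : ℝ := ∏ i ∈ Finset.range p, (x + i)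

/-- The hypergeometric function `₀F₁(c; z) = ∑_{p≥0} z^p/(p! (c)_p)`. -/
noncomputable def hyp0F1 (c z : ℝ) : ℝ := ∑' p : ℕ, z ^ p / ((Nat.factorial p) * poch c p)

/-- `V(s) = e^{−βs/8} ₀F₁(2/β; s/4)`. -/
noncomputable def Vfun (β s : ℝ) : ℝ := Real.exp (-β * s / 8) * hyp0F1 (2 / β) (s / 4)

/-- The `a = 1` finite-`N` gap probability
`F_N(s) = e^{−βs/8} ∑_{p=0}^N ((−N)_p/(p! (2/β)_p)) (−s/(4N))^p`. -/
noncomputable def gapF (β : ℝ) (N : ℕ) (s : ℝ) : ℝ :=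
  Real.exp (-β * s / 8) *
    ∑ p ∈ Finset.range (N + 1),
      poch (-(N : ℝ)) p / ((Nat.factorial p) * poch (2 / β) p) * (-s / (4 * N)) ^ p

open Finset in
lemma poch_succ (x : ℝ) (p : ℕ) : poch x (p + 1) = poch x p * (x + p) :=
  Finset.prod_range_succ _ _

lemma poch_pos {c : ℝ} (hc : 0 < c) (p : ℕ) : 0 < poch c p :=
  Finset.prod_pos fun i _ => by positivity

/-- master summability with weight (p+1)(p+2) -/
lemma summable_main {c z : ℝ} (hc : 0 < c) (hz : 0 < z) :
    Summable (fun p : ℕ => ((p : ℝ) + 1) * ((p : ℝ) + 2) * z ^ p / (p.factorial * poch c p)) := by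
  set f : ℕ → ℝ := fun p => ((p : ℝ) + 1) * ((p : ℝ) + 2) * z ^ p / (p.factorial * poch c p) with hf
  have hfpos : ∀ p, 0 < f p := by
    intro p
    have := poch_pos hc p
    have := Nat.factorial_pos p
    rw [hf]
    positivity
  apply summable_of_ratio_test_tendsto_lt_one (l := 0) one_pos
  · exact Eventually.of_forall fun p => (hfpos p).ne'
  · have key : ∀ p : ℕ, f (p + 1) = (z * ((p : ℝ) + 3) / (((p : ℝ) + 1) ^ 2 * (c + p))) * f p := by
      intro p
      have h1 : (0 : ℝ) < p.factorial := by exact_mod_cast Nat.factorial_pos p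
      have h2 := poch_pos hc p
      have h3 : (0 : ℝ) < c + p := by positivity
      rw [hf]
      simp only [poch_succ, Nat.factorial_succ, Nat.cast_succ, Nat.cast_mul, pow_succ]
      push_cast
      field_simp
      ring
    have hb : ∀ p : ℕ, ‖f (p + 1)‖ / ‖f p‖ ≤ 3 * z / (c + p) := by
      intro p
      have h3 : (0 : ℝ) < c + p := by positivity
      have hfne : ‖f p‖ ≠ 0 := norm_ne_zero_iff.mpr (hfpos p).ne'
      rw [key p, norm_mul, mul_div_assoc, div_self hfne, mul_one]
      have hpos : (0:ℝ) < z * ((p : ℝ) + 3) / (((p : ℝ) + 1) ^ 2 * (c + p)) := by positivity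
      rw [Real.norm_eq_abs, abs_of_pos hpos]
      rw [div_le_div_iff₀ (by positivity) h3]
      nlinarith [mul_nonneg (mul_nonneg hz.le h3.le) (show (0:ℝ) ≤ 3*(p:ℝ)^2+5*p by positivity)]
    have hto : Tendsto (fun p : ℕ => 3 * z / (c + p)) atTop (nhds 0) := by
      apply Tendsto.div_atTop tendsto_const_nhds
      exact tendsto_atTop_add_const_left _ c tendsto_natCast_atTop_atTop
    exact squeeze_zero (fun p => by positivity) hb hto

/-- Weighted summability: any weight bounded by `K(p+1)(p+2)`. -/
lemma summable_wt {c z : ℝ} (hc : 0 < c) (hz : 0 < z) (w : ℕ → ℝ) (K : ℝ)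
    (hw : ∀ p : ℕ, |w p| ≤ K * (((p : ℝ) + 1) * ((p : ℝ) + 2))) :
    Summable (fun p : ℕ => w p * (z ^ p / (p.factorial * poch c p))) := by
  apply Summable.of_norm_bounded
    (g := fun p : ℕ => K * (((p : ℝ) + 1) * ((p : ℝ) + 2) * z ^ p / (p.factorial * poch c p)))
    ((summable_main hc hz).mul_left K)
  intro p
  have h1 : (0 : ℝ) < p.factorial := by exact_mod_cast Nat.factorial_pos p
  have h2 := poch_pos hc p
  have hb : (0 : ℝ) ≤ z ^ p / (p.factorial * poch c p) := by positivity
  rw [Real.norm_eq_abs, abs_mul, abs_of_nonneg hb]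
  calc |w p| * (z ^ p / (p.factorial * poch c p))
      ≤ K * (((p : ℝ) + 1) * ((p : ℝ) + 2)) * (z ^ p / (p.factorial * poch c p)) := by
        exact mul_le_mul_of_nonneg_right (hw p) hb
    _ = K * (((p : ℝ) + 1) * ((p : ℝ) + 2) * z ^ p / (p.factorial * poch c p)) := by ring

lemma hasDerivAt_hyp {c : ℝ} (hc : 0 < c) {z : ℝ} (hz : 0 < z) :
    HasDerivAt (hyp0F1 c)
      (∑' p : ℕ, (p : ℝ) * z ^ (p - 1) / (p.factorial * poch c p)) z := by
  have h := hasDerivAt_tsum_of_isPreconnected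
      (u := fun p : ℕ => ((p : ℝ) + 1) * ((p : ℝ) + 2) * (z + 1) ^ p / (p.factorial * poch c p))
      (g := fun (p : ℕ) (y : ℝ) => y ^ p / (p.factorial * poch c p))
      (g' := fun (p : ℕ) (y : ℝ) => (p : ℝ) * y ^ (p - 1) / (p.factorial * poch c p))
      (t := Set.Ioo (-(z + 1)) (z + 1)) (y₀ := 0) (y := z)
      (summable_main hc (by linarith)) isOpen_Ioo isPreconnected_Ioo
      (fun p y _ => (hasDerivAt_pow p y).div_const _)
      ?_ (by constructor <;> nlinarith) ?_ (by constructor <;> nlinarith)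
  · exact h
  · -- derivative bound on the interval
    intro p y hy
    have h1 : (0 : ℝ) < p.factorial := by exact_mod_cast Nat.factorial_pos p
    have h2 := poch_pos hc p
    have hy1 : |y| ≤ z + 1 := by
      rw [abs_le]; exact ⟨(hy.1).le, (hy.2).le⟩
    have hz1 : (1 : ℝ) ≤ z + 1 := by linarith
    rw [Real.norm_eq_abs, abs_div, abs_mul, abs_pow,
      abs_of_nonneg (by positivity : (0:ℝ) ≤ ((p:ℕ):ℝ)),
      abs_of_pos (by positivity : (0:ℝ) < (p.factorial : ℝ) * poch c p)]
    have hnum : (p : ℝ) * |y| ^ (p - 1) ≤ ((p : ℝ) + 1) * ((p : ℝ) + 2) * (z + 1) ^ p := by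
      have e1 : |y| ^ (p - 1) ≤ (z + 1) ^ (p - 1) := pow_le_pow_left₀ (abs_nonneg y) hy1 _
      have e2 : (z + 1) ^ (p - 1) ≤ (z + 1) ^ p := pow_le_pow_right₀ hz1 (Nat.sub_le p 1)
      have e3 : (p : ℝ) ≤ ((p : ℝ) + 1) * ((p : ℝ) + 2) := by nlinarith [Nat.cast_nonneg (α := ℝ) p]
      calc (p : ℝ) * |y| ^ (p - 1) ≤ (p : ℝ) * (z + 1) ^ p := by
            exact mul_le_mul_of_nonneg_left (e1.trans e2) (Nat.cast_nonneg p)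
        _ ≤ ((p : ℝ) + 1) * ((p : ℝ) + 2) * (z + 1) ^ p := by
            exact mul_le_mul_of_nonneg_right e3 (by positivity)
    exact div_le_div_of_nonneg_right hnum (by positivity) |>.trans_eq rfl
  · -- summable at 0
    apply summable_of_ne_finset_zero (s := {0})
    intro p hp
    simp only [Finset.mem_singleton] at hp
    simp [zero_pow hp]

lemma sum_range_id_real (p : ℕ) : (∑ i ∈ Finset.range p, (i : ℝ)) = p * (p - 1) / 2 := by
  induction p with
  | zero => simp
  | succ n ih => rw [Finset.sum_range_succ, ih]; push_cast; ring

/-- Weierstrass: `1 - ∑ f ≤ ∏ (1 - f)` for `f i ∈ [0,1]`. -/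
lemma one_sub_sum_le_prod (p : ℕ) (f : ℕ → ℝ) (h0 : ∀ i < p, 0 ≤ f i) (h1 : ∀ i < p, f i ≤ 1) :
    1 - ∑ i ∈ Finset.range p, f i ≤ ∏ i ∈ Finset.range p, (1 - f i) := by
  induction p with
  | zero => simp
  | succ n ih =>
    have h0' : ∀ i < n, 0 ≤ f i := fun i hi => h0 i (hi.trans n.lt_succ_self)
    have h1' : ∀ i < n, f i ≤ 1 := fun i hi => h1 i (hi.trans n.lt_succ_self)
    have ihn := ih h0' h1'
    have hfn0 := h0 n n.lt_succ_self
    have hfn1 := h1 n n.lt_succ_self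
    have hs : 0 ≤ ∑ i ∈ Finset.range n, f i := Finset.sum_nonneg fun i hi =>
      h0' i (Finset.mem_range.mp hi)
    rw [Finset.prod_range_succ, Finset.sum_range_succ]
    calc 1 - (∑ i ∈ Finset.range n, f i + f n)
        ≤ (1 - ∑ i ∈ Finset.range n, f i) * (1 - f n) := by nlinarith
      _ ≤ (∏ i ∈ Finset.range n, (1 - f i)) * (1 - f n) := by
          exact mul_le_mul_of_nonneg_right ihn (by linarith)

/-- pointwise limit: `N(∏_{i<p}(1 - i/N) - 1) → -p(p-1)/2`. -/
lemma tendsto_pointwise (p : ℕ) :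
    Tendsto (fun N : ℕ => (N : ℝ) * ((∏ i ∈ Finset.range p, (1 - (i : ℝ) / N)) - 1)) atTop
      (nhds (-((p : ℝ) * ((p : ℝ) - 1) / 2))) := by
  set q : ℝ → ℝ := fun x => ∏ i ∈ Finset.range p, (1 - (i : ℝ) * x) with hq
  have hderiv : HasDerivAt q (-((p : ℝ) * ((p : ℝ) - 1) / 2)) 0 := by
    have h := HasDerivAt.finset_prod (u := Finset.range p)
      (f := fun (i : ℕ) (x : ℝ) => 1 - (i : ℝ) * x) (f' := fun i => -(i : ℝ)) (x := 0)
      (fun i _ => by simpa using ((hasDerivAt_id (0:ℝ)).const_mul (i:ℝ)).const_sub 1)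
    convert h using 1
    · rfl
    · rfl
    · ext x; simp [hq, Finset.prod_apply]
    rw [Finset.sum_congr rfl (fun i _ => by simp : ∀ i ∈ Finset.range p,
      (∏ j ∈ (Finset.range p).erase i, (1 - (j : ℝ) * 0)) • (-(i:ℝ)) = -(i:ℝ))]
    rw [Finset.sum_neg_distrib, sum_range_id_real]
  have hslope := hasDerivAt_iff_tendsto_slope.mp hderiv
  have h1N : Tendsto (fun N : ℕ => 1 / (N : ℝ)) atTop (nhdsWithin 0 {(0:ℝ)}ᶜ) := by
    apply tendsto_nhdsWithin_of_tendsto_nhds_of_eventually_within _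
      tendsto_one_div_atTop_nhds_zero_nat
    filter_upwards [eventually_ge_atTop 1] with N hN
    have : (0:ℝ) < (N:ℝ) := by exact_mod_cast Nat.lt_of_lt_of_le Nat.zero_lt_one hN
    simp only [Set.mem_compl_iff, Set.mem_singleton_iff, one_div, ne_eq, inv_eq_zero,
      Nat.cast_eq_zero]
    omega
  have hcomp := hslope.comp h1N
  apply hcomp.congr'
  filter_upwards [eventually_ge_atTop 1] with N hN
  have hNpos : (0:ℝ) < (N:ℝ) := by exact_mod_cast Nat.lt_of_lt_of_le Nat.zero_lt_one hN
  have hq0 : q 0 = 1 := by simp [hq]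
  simp only [Function.comp_apply, slope_def_field, hq0]
  rw [hq]
  simp only [sub_zero]
  rw [div_eq_iff (by positivity : (1:ℝ)/(N:ℝ) ≠ 0)]
  have : ∀ i ∈ Finset.range p, (1 : ℝ) - (i : ℝ) * (1 / (N:ℝ)) = 1 - (i:ℝ)/(N:ℝ) := by
    intro i _; rw [mul_one_div]
  rw [Finset.prod_congr rfl this]
  field_simp

lemma core_identity {c z : ℝ} (hc : 0 < c) (hz : 0 < z) :
    (∑' p : ℕ, ((p : ℝ) * ((p : ℝ) - 1) + c * p) * (z ^ p / (p.factorial * poch c p)))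
      = z * ∑' p : ℕ, z ^ p / (p.factorial * poch c p) := by
  have hsum : Summable (fun p : ℕ =>
      ((p : ℝ) * ((p : ℝ) - 1) + c * p) * (z ^ p / (p.factorial * poch c p))) := by
    apply summable_wt hc hz _ (1 + c)
    intro p
    have hp : (0:ℝ) ≤ (p:ℝ) := Nat.cast_nonneg p
    have hp01 : (p:ℝ) * ((p:ℝ) - 1) ≥ 0 := by
      rcases Nat.eq_zero_or_pos p with h | h
      · simp [h]
      · have : (1:ℝ) ≤ (p:ℝ) := by exact_mod_cast h
        nlinarith
    rw [abs_of_nonneg (by nlinarith [mul_nonneg hc.le hp])]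
    nlinarith [mul_nonneg hc.le hp, mul_nonneg (mul_nonneg hc.le hp) hp]
  rw [hsum.tsum_eq_zero_add]
  simp only [Nat.cast_zero, Nat.factorial_zero, zero_mul, mul_zero, zero_add, add_zero, pow_zero]
  rw [← tsum_mul_left]
  apply tsum_congr
  intro p
  have h1 : (0 : ℝ) < p.factorial := by exact_mod_cast Nat.factorial_pos p
  have h2 := poch_pos hc p
  have h3 : (0 : ℝ) < c + p := by positivity
  rw [poch_succ, Nat.factorial_succ]
  push_cast
  field_simp
  ring

theorem gap_first_order_correction (β s : ℝ) (hβ : 0 < β) (hs : 0 < s) :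
    Tendsto (fun N : ℕ => (N : ℝ) * (gapF β N s - Vfun β s)) atTop
      (nhds ((s / β) * deriv (Vfun β) s)) := by
  have hc : 0 < 2 / β := by positivity
  have hz : 0 < s / 4 := by positivity
  set c : ℝ := 2 / β with hcdef
  set z : ℝ := s / 4 with hzdef
  set E : ℝ := Real.exp (-β * s / 8) with hEdef
  set b : ℕ → ℝ := fun p => z ^ p / (p.factorial * poch c p) with hbdef
  have hbpos : ∀ p, 0 < b p := by
    intro p
    have h1 : (0 : ℝ) < p.factorial := by exact_mod_cast Nat.factorial_pos p
    have h2 := poch_pos hc p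
    rw [hbdef]
    positivity
  -- summabilities
  have S0 : Summable b := by
    have := summable_wt hc hz (fun _ => (1:ℝ)) 1 (fun p => by
      rw [abs_one]; nlinarith [Nat.cast_nonneg (α := ℝ) p])
    simpa using this
  have S1 : Summable (fun p : ℕ => (p : ℝ) * b p) := by
    apply summable_wt hc hz _ 1
    intro p
    have hp : (0:ℝ) ≤ (p:ℝ) := Nat.cast_nonneg p
    rw [abs_of_nonneg hp]; nlinarith
  have S2 : Summable (fun p : ℕ => ((p : ℝ) * ((p : ℝ) - 1)) * b p) := by
    apply summable_wt hc hz _ 1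
    intro p
    have hp : (0:ℝ) ≤ (p:ℝ) := Nat.cast_nonneg p
    have hp01 : (0:ℝ) ≤ (p:ℝ) * ((p:ℝ) - 1) := by
      rcases Nat.eq_zero_or_pos p with h | h
      · simp [h]
      · have : (1:ℝ) ≤ (p:ℝ) := by exact_mod_cast h
        nlinarith
    rw [abs_of_nonneg hp01]; nlinarith
  have Sb : Summable (fun p : ℕ => ((p : ℝ) * ((p : ℝ) - 1) / 2) * b p) := by
    have := S2.mul_left (1/2 : ℝ)
    apply this.congr; intro p; ring
  have Slim : Summable (fun p : ℕ => (-((p : ℝ) * ((p : ℝ) - 1) / 2)) * b p) := by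
    have := Sb.neg
    apply this.congr; intro p; ring
  -- derivative
  have hW := hasDerivAt_hyp hc hz
  set D : ℝ := ∑' p : ℕ, (p : ℝ) * z ^ (p - 1) / (p.factorial * poch c p) with hDdef
  have hzD : z * D = ∑' p : ℕ, (p : ℝ) * b p := by
    rw [hDdef, ← tsum_mul_left]
    apply tsum_congr
    intro p
    cases p with
    | zero => simp [hbdef]
    | succ n =>
      rw [hbdef]
      simp only [Nat.add_sub_cancel, pow_succ]
      ring
  have hVder : HasDerivAt (Vfun β)
      (E * (-β / 8) * hyp0F1 c z + E * (D * (1 / 4))) s := by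
    have h1 : HasDerivAt (fun s' : ℝ => -β * s' / 8) (-β / 8) s := by
      simpa using ((hasDerivAt_id s).const_mul (-β)).div_const 8
    have h2 : HasDerivAt (fun s' : ℝ => Real.exp (-β * s' / 8)) (E * (-β / 8)) s := h1.exp
    have h3 : HasDerivAt (fun s' : ℝ => s' / 4) (1 / 4) s := by
      simpa using (hasDerivAt_id s).div_const 4
    have h4 : HasDerivAt (fun s' : ℝ => hyp0F1 c (s' / 4)) (D * (1 / 4)) s := by
      have := hW.comp s h3; exact this
    exact h2.mul h4
  rw [hVder.deriv]
  -- key identity for the limit value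
  have hsum_id : (∑' p : ℕ, (-((p : ℝ) * ((p : ℝ) - 1) / 2)) * b p)
      = -(z / 2) * hyp0F1 c z + (c * z / 2) * D := by
    have h1 : z * hyp0F1 c z
        = (∑' p : ℕ, ((p : ℝ) * ((p : ℝ) - 1)) * b p) + c * ∑' p : ℕ, (p : ℝ) * b p := by
      have hWz : hyp0F1 c z = ∑' p : ℕ, z ^ p / (p.factorial * poch c p) := rfl
      rw [hWz, ← core_identity hc hz]
      rw [← tsum_mul_left, ← S2.tsum_add (S1.mul_left c)]
      exact tsum_congr fun p => by rw [hbdef]; ring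
    have h3 : (∑' p : ℕ, (-((p : ℝ) * ((p : ℝ) - 1) / 2)) * b p)
        = (-(1/2) : ℝ) * ∑' p : ℕ, ((p : ℝ) * ((p : ℝ) - 1)) * b p := by
      rw [← tsum_mul_left]
      exact tsum_congr fun p => by ring
    rw [h3]
    linear_combination (1/2 : ℝ) * h1 - (c/2 : ℝ) * hzD
  have key : (s / β) * (E * (-β / 8) * hyp0F1 c z + E * (D * (1 / 4)))
      = E * ∑' p : ℕ, (-((p : ℝ) * ((p : ℝ) - 1) / 2)) * b p := by
    rw [hsum_id, hzdef, hcdef]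
    field_simp
    ring
  rw [key]
  -- zero product beyond N
  have haN0 : ∀ N : ℕ, 1 ≤ N → ∀ p : ℕ, N + 1 ≤ p →
      (∏ i ∈ Finset.range p, (1 - (i : ℝ) / N)) = 0 := by
    intro N hN p hp
    apply Finset.prod_eq_zero (Finset.mem_range.mpr (by omega : N < p))
    have hN0 : ((N : ℕ) : ℝ) ≠ 0 := Nat.cast_ne_zero.mpr (by omega)
    rw [div_self hN0, sub_self]
  -- eventual identity of the sequence
  have hseq : ∀ᶠ N : ℕ in atTop, (N : ℝ) * (gapF β N s - Vfun β s)
      = E * ∑' p : ℕ, ((N : ℝ) * ((∏ i ∈ Finset.range p, (1 - (i : ℝ) / N)) - 1) * b p) := by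
    filter_upwards [eventually_ge_atTop 1] with N hN
    have hNpos : (0 : ℝ) < (N : ℝ) := by exact_mod_cast Nat.lt_of_lt_of_le Nat.zero_lt_one hN
    set aN : ℕ → ℝ := fun p => ∏ i ∈ Finset.range p, (1 - (i : ℝ) / N) with haNdef
    have hvan : ∀ p ∉ Finset.range (N + 1), aN p * b p = 0 := by
      intro p hp
      have hp' : N + 1 ≤ p := le_of_not_gt fun h => hp (Finset.mem_range.mpr h)
      rw [haNdef]
      simp only []
      rw [haN0 N hN p hp', zero_mul]
    have hterm : ∀ p, poch (-(N : ℝ)) p / (p.factorial * poch c p) * (-s / (4 * N)) ^ p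
        = aN p * b p := by
      intro p
      have hprod : poch (-(N : ℝ)) p * (-s / (4 * (N : ℝ))) ^ p = aN p * z ^ p := by
        have e1 : (-s / (4 * (N : ℝ))) ^ p = ∏ _i ∈ Finset.range p, (-s / (4 * (N : ℝ))) := by
          rw [Finset.prod_const, Finset.card_range]
        have e2 : z ^ p = ∏ _i ∈ Finset.range p, z := by
          rw [Finset.prod_const, Finset.card_range]
        rw [haNdef]
        simp only [poch]
        rw [e1, e2, ← Finset.prod_mul_distrib, ← Finset.prod_mul_distrib]
        apply Finset.prod_congr rfl
        intro i _
        rw [hzdef]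
        field_simp
        ring
      calc poch (-(N : ℝ)) p / (p.factorial * poch c p) * (-s / (4 * N)) ^ p
          = poch (-(N : ℝ)) p * (-s / (4 * (N : ℝ))) ^ p / (p.factorial * poch c p) := by
            ring
        _ = aN p * z ^ p / (p.factorial * poch c p) := by rw [hprod]
        _ = aN p * b p := by rw [hbdef]; ring
    have hSaN : Summable (fun p => aN p * b p) := summable_of_ne_finset_zero hvan
    have hgap : gapF β N s = E * ∑' p, aN p * b p := by
      simp only [gapF]
      rw [← hcdef, ← hEdef]
      congr 1
      rw [tsum_eq_sum hvan]
      exact Finset.sum_congr rfl fun p _ => hterm p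
    have hVs : Vfun β s = E * ∑' p, b p := rfl
    rw [hgap, hVs]
    have step : (N : ℝ) * (E * (∑' p, aN p * b p) - E * ∑' p, b p)
        = E * ((N : ℝ) * ∑' p, (aN p * b p - b p)) := by
      rw [hSaN.tsum_sub S0]; ring
    rw [step, ← tsum_mul_left]
    congr 1
    exact tsum_congr fun p => by ring
  -- dominated convergence
  have hDCT : Tendsto (fun N : ℕ => ∑' p : ℕ,
      ((N : ℝ) * ((∏ i ∈ Finset.range p, (1 - (i : ℝ) / N)) - 1) * b p)) atTop
      (nhds (∑' p : ℕ, (-((p : ℝ) * ((p : ℝ) - 1) / 2)) * b p)) := by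
    apply tendsto_tsum_of_dominated_convergence
      (bound := fun p : ℕ => ((p : ℝ) * ((p : ℝ) - 1) / 2) * b p) Sb
    · intro p
      exact (tendsto_pointwise p).mul_const (b p)
    · filter_upwards [eventually_ge_atTop 1] with N hN
      intro p
      have hNpos : (0 : ℝ) < (N : ℝ) := by exact_mod_cast Nat.lt_of_lt_of_le Nat.zero_lt_one hN
      rw [Real.norm_eq_abs, abs_mul, abs_of_pos (hbpos p)]
      apply mul_le_mul_of_nonneg_right ?_ (hbpos p).le
      rcases le_or_gt p N with hpN | hpN
      · -- p ≤ N : Weierstrass bound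
        have hfac0 : ∀ i < p, 0 ≤ (i : ℝ) / N := fun i _ => by positivity
        have hfac1 : ∀ i < p, (i : ℝ) / N ≤ 1 := by
          intro i hi
          rw [div_le_one hNpos]
          exact_mod_cast Nat.le_of_lt_succ (by omega)
        have hP1 : (∏ i ∈ Finset.range p, (1 - (i : ℝ) / N)) ≤ 1 := by
          apply Finset.prod_le_one
          · intro i hi
            have := hfac1 i (Finset.mem_range.mp hi); linarith
          · intro i hi
            have := hfac0 i (Finset.mem_range.mp hi); linarith
        have hP2 := one_sub_sum_le_prod p (fun i => (i : ℝ) / N) hfac0 hfac1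
        have hsum : (∑ i ∈ Finset.range p, (i : ℝ) / N) = ((p : ℝ) * ((p : ℝ) - 1) / 2) / N := by
          rw [← Finset.sum_div, sum_range_id_real]
        rw [hsum] at hP2
        rw [abs_of_nonpos (by nlinarith : (N : ℝ) *
          ((∏ i ∈ Finset.range p, (1 - (i : ℝ) / N)) - 1) ≤ 0)]
        have hfe : ((p : ℝ) * ((p : ℝ) - 1) / 2) / N * N = (p : ℝ) * ((p : ℝ) - 1) / 2 := by
          field_simp
        nlinarith
      · -- p > N
        rw [haN0 N hN p (by omega)]
        have h2 : (N : ℝ) + 1 ≤ (p : ℝ) := by exact_mod_cast hpN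
        have hN1 : (1 : ℝ) ≤ (N : ℝ) := by exact_mod_cast hN
        rw [show (N : ℝ) * ((0 : ℝ) - 1) = -(N : ℝ) by ring, abs_neg, abs_of_pos hNpos]
        nlinarith
  exact Tendsto.congr' (hseq.mono fun N h => h.symm) (hDCT.const_mul E)
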